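/- Let q^{-1}-Hermite polynomials h_n(x|q) satisfy 2x h_n = h_{n+1} + q^{-n}(1-q^n) h_{n-1} with h_0 = 1, h_1 = 2x, and set x_n(t) = (q^{-n/2} t - q^{n/2}/t)/2, p_n(t) = t^{-n} q^{n^2/2} h_n(x_n(t)|q). Then (1 - q^n/t^2) p_n(t) = p_{n+1}(q^{1/2} t) + (1-q^n) t^{-2} p_{n-1}(q^{-1/2} t) for all n \geq 0 and t \neq 0. -/

import Mathlib

/-- The `q⁻¹`-Hermite polynomials `h_n(x|q)` of Askey, Ismail and Masson:
`h_0 = 1`, `h_1 = 2x`, and `2x h_{n+1} = h_{n+2} + q^{-(n+1)}(1-q^{n+1}) h_n`. -/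
noncomputable def qInvHermite (q : ℝ) : ℕ → ℂ → ℂ
  | 0 => fun _ => 1
  | 1 => fun x => 2 * x
  | (n + 2) => fun x =>
      2 * x * qInvHermite q (n + 1) x
        - ((q : ℂ) ^ (n + 1))⁻¹ * (1 - (q : ℂ) ^ (n + 1)) * qInvHermite q n x

/-- The scaling `x_n(t) = (q^{-n/2} t - q^{n/2}/t)/2`. -/
noncomputable def xScale (q : ℝ) (n : ℕ) (t : ℂ) : ℂ :=
  (((Real.sqrt q : ℂ) ^ n)⁻¹ * t - (Real.sqrt q : ℂ) ^ n / t) / 2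

/-- The renormalized polynomials `p_n(t) = t^{-n} q^{n²/2} h_n(x_n(t)|q)`. -/
noncomputable def pFun (q : ℝ) (n : ℕ) (t : ℂ) : ℂ :=
  (t ^ n)⁻¹ * (Real.sqrt q : ℂ) ^ (n ^ 2) * qInvHermite q n (xScale q n t)

/-
The substitution `x = x_n(t)` is compatible with the shifts `t ↦ q^{±1/2} t`, since
`x_{n+1}(q^{1/2} t) = x_n(t) = x_{n-1}(q^{-1/2} t)`. Hence all three `p`'s in the identity are
multiples of `h_{n+1}, h_n, h_{n-1}` at the same point `x_n(t)`, and after writing `2 x_n(t)` and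
`q^n` in terms of `a = q^{n/2}` the identity is the three-term recurrence of the `h_n`.
-/

section

variable {q : ℝ}

lemma ofReal_sqrt_ne_zero (hq : 0 < q) : (Real.sqrt q : ℂ) ≠ 0 := by
  exact_mod_cast (Real.sqrt_pos.mpr hq).ne'

lemma xScale_succ_sqrt_mul (hq : 0 < q) (n : ℕ) (t : ℂ) :
    xScale q (n + 1) ((Real.sqrt q : ℂ) * t) = xScale q n t := by
  have hs := ofReal_sqrt_ne_zero hq
  rw [xScale, xScale, pow_succ', mul_div_mul_left _ _ hs, mul_inv_rev, mul_assoc, inv_mul_cancel_left₀ hs]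

lemma pFun_sqrt_mul (hq : 0 < q) (n : ℕ) (t : ℂ) :
    pFun q (n + 1) ((Real.sqrt q : ℂ) * t)
      = (t ^ (n + 1))⁻¹ * ((Real.sqrt q : ℂ) ^ n) ^ (n + 1) * qInvHermite q (n + 1) (xScale q n t) := by
  have hs := ofReal_sqrt_ne_zero hq
  have hexp : (Real.sqrt q : ℂ) ^ ((n + 1) ^ 2)
      = (Real.sqrt q : ℂ) ^ (n + 1) * ((Real.sqrt q : ℂ) ^ n) ^ (n + 1) := by
    rw [← pow_mul, ← pow_add]; ring_nf
  rw [pFun, xScale_succ_sqrt_mul hq, hexp, mul_pow, mul_inv]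
  field_simp

lemma pFun_sqrt_inv_mul (hq : 0 < q) (n : ℕ) (t : ℂ) :
    pFun q n ((Real.sqrt q : ℂ)⁻¹ * t)
      = (t ^ n)⁻¹ * ((Real.sqrt q : ℂ) ^ (n + 1)) ^ n * qInvHermite q n (xScale q (n + 1) t) := by
  have hs := ofReal_sqrt_ne_zero hq
  have hexp : ((Real.sqrt q : ℂ) ^ (n + 1)) ^ n
      = (Real.sqrt q : ℂ) ^ n * (Real.sqrt q : ℂ) ^ (n ^ 2) := by
    rw [← pow_mul, ← pow_add]; ring_nf
  rw [pFun, ← xScale_succ_sqrt_mul hq n, mul_inv_cancel_left₀ hs, hexp, mul_pow, inv_pow, mul_inv, inv_inv]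
  ring

end

theorem pFun_recurrence_general (q : ℝ) (hq0 : 0 < q) (n : ℕ) (t : ℂ) (ht : t ≠ 0) :
    (1 - (q : ℂ) ^ n / t ^ 2) * pFun q n t
      = pFun q (n + 1) ((Real.sqrt q : ℂ) * t)
        + (1 - (q : ℂ) ^ n) / t ^ 2 * pFun q (n - 1) (((Real.sqrt q : ℂ))⁻¹ * t) := by
  rw [pFun_sqrt_mul hq0]
  cases n with
  | zero =>
    -- `0 - 1` truncates to `0`, but the coefficient `1 - q ^ 0` of that term vanishes.
    simp only [pFun, qInvHermite, xScale]
    field_simp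
    ring
  | succ m =>
    set a := (Real.sqrt q : ℂ) ^ (m + 1)
    have ha : a ≠ 0 := pow_ne_zero _ (ofReal_sqrt_ne_zero hq0)
    have hqa : (q : ℂ) ^ (m + 1) = a ^ 2 := by
      have hs2 : (Real.sqrt q : ℂ) ^ 2 = q := by exact_mod_cast Real.sq_sqrt hq0.le
      rw [← pow_mul, mul_comm, pow_mul, hs2]
    have h2x : 2 * xScale q (m + 1) t = a⁻¹ * t - a / t := by
      rw [xScale]; ring
    rw [Nat.add_sub_cancel, pFun_sqrt_inv_mul hq0, pFun, sq (m + 1), pow_mul]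
    simp only [qInvHermite]
    rw [h2x, hqa]
    field_simp
    ring

/-- the renormalized `q⁻¹`-Hermite polynomials satisfy
`(1 - qⁿ/t²) p_n(t) = p_{n+1}(q^{1/2} t) + (1-qⁿ) t^{-2} p_{n-1}(q^{-1/2} t)`
for all `n ≥ 0` and `t ≠ 0` (at `n = 0` the last term has coefficient `0`). -/
theorem pFun_recurrence (q : ℝ) (hq0 : 0 < q) (hq1 : q < 1) (n : ℕ) (t : ℂ) (ht : t ≠ 0) :
    (1 - (q : ℂ) ^ n / t ^ 2) * pFun q n t
      = pFun q (n + 1) ((Real.sqrt q : ℂ) * t)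
        + (1 - (q : ℂ) ^ n) / t ^ 2 * pFun q (n - 1) (((Real.sqrt q : ℂ))⁻¹ * t) :=
  pFun_recurrence_general q hq0 n t ht
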